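/- Let F : ℂⁿ → ℂ, n ≥ 2, be a nonconstant mixed polynomial which is polar weighted-homogeneous. Then the image of F contains a disk around 0, even in the germ sense: for every ε > 0 there exists η > 0 such that every w ∈ ℂ with |w| < η is of the form w = F(z) for some z with ‖z‖ < ε. (Lemma established in the proof of Theorem 5.2 via the Curve Selection Lemma and the S¹-action.) -/

import Mathlib

open Complex Filter Function Metric

noncomputable section

/-- `ℂⁿ` with its Euclidean (Hermitian) norm. -/
abbrev Cn (n : ℕ) := EuclideanSpace ℂ (Fin n)

/-- `F : ℂⁿ → ℂ` is a mixed polynomial: a polynomial in `z₁,…,zₙ` and `z̄₁,…,z̄ₙ`. -/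
def IsMixedPoly {n : ℕ} (F : Cn n → ℂ) : Prop :=
  ∃ (S : Finset ((Fin n → ℕ) × (Fin n → ℕ))) (c : ((Fin n → ℕ) × (Fin n → ℕ)) → ℂ),
    ∀ z : Cn n, F z =
      ∑ p ∈ S, c p * (∏ j, (z j) ^ (p.1 j)) * (∏ j, (starRingEnd ℂ (z j)) ^ (p.2 j))

/-- `F` is polar weighted-homogeneous. -/
def IsPolarWeightedHomogeneous {n : ℕ} (F : Cn n → ℂ) : Prop :=
  ∃ (p : Fin n → ℤ) (k : ℤ), (∀ j, p j ≠ 0) ∧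
    Finset.univ.gcd (fun j => (p j).natAbs) = 1 ∧ k ≠ 0 ∧
    ∀ lam : ℂ, ‖lam‖ = 1 → ∀ z : Cn n,
      F (WithLp.toLp 2 (fun j => lam ^ (p j) * z j)) = lam ^ k * F z

/-!
`F 0 = 0`, since `F 0 = λ ^ k * F 0` for a `λ ∈ S¹` with `λ ^ k = -1`. Along a real ray,
`t ↦ F (t • z₀)` is a polynomial in `t`, so a nonconstant `F` takes nonzero values at points `z₁`
arbitrarily close to `0`. By the intermediate value theorem on the segment `[0, z₁]` every modulus
below `‖F z₁‖` is attained, and since `k ≠ 0` the norm-preserving `S¹`-action turns a value of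
the right modulus into any prescribed value of that modulus.
-/

open Topology Polynomial

theorem Complex.exists_norm_eq_one_zpow_eq {k : ℤ} (hk : k ≠ 0) {u : ℂ} (hu : ‖u‖ = 1) :
    ∃ lam : ℂ, ‖lam‖ = 1 ∧ lam ^ k = u := by
  refine ⟨exp ((u.arg / k : ℝ) * I), norm_exp_ofReal_mul_I _, ?_⟩
  have hk' : (k : ℂ) ≠ 0 := Int.cast_ne_zero.mpr hk
  rw [← exp_int_mul, ← mul_assoc, ofReal_div, ofReal_intCast, mul_div_cancel₀ _ hk']
  simpa [hu] using norm_mul_exp_arg_mul_I u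

theorem EuclideanSpace.norm_toLp_zpow_mul {ι : Type*} [Fintype ι] {lam : ℂ} (hlam : ‖lam‖ = 1)
    (p : ι → ℤ) (z : EuclideanSpace ℂ ι) :
    ‖(WithLp.toLp 2 (fun j => lam ^ p j * z j) : EuclideanSpace ℂ ι)‖ = ‖z‖ := by
  simp only [EuclideanSpace.norm_eq, norm_mul, norm_zpow, hlam, one_zpow, one_mul]

section
variable {n : ℕ} {F : Cn n → ℂ}

theorem IsPolarWeightedHomogeneous.apply_zero (hF : IsPolarWeightedHomogeneous F) : F 0 = 0 := by
  obtain ⟨p, k, -, -, hk, hF⟩ := hF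
  obtain ⟨lam, hlam, hlamk⟩ := exists_norm_eq_one_zpow_eq hk (u := -1) (by simp)
  have h := hF lam hlam 0
  simp only [WithLp.ofLp_zero, Pi.zero_apply, mul_zero, hlamk, neg_one_mul] at h
  rw [← Pi.zero_def, WithLp.toLp_zero, eq_neg_iff_add_eq_zero] at h
  exact add_self_eq_zero.mp h

theorem IsPolarWeightedHomogeneous.exists_norm_eq_apply_eq (hF : IsPolarWeightedHomogeneous F)
    {z : Cn n} {w : ℂ} (h : ‖F z‖ = ‖w‖) : ∃ z' : Cn n, ‖z'‖ = ‖z‖ ∧ F z' = w := by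
  obtain ⟨p, k, -, -, hk, hF⟩ := hF
  rcases eq_or_ne (F z) 0 with hz | hz
  · exact ⟨z, rfl, by simpa [hz, eq_comm] using h⟩
  obtain ⟨lam, hlam, hlamk⟩ := exists_norm_eq_one_zpow_eq hk (u := w / F z)
    (by rw [norm_div, h, div_self (h ▸ norm_ne_zero_iff.mpr hz)])
  exact ⟨_, EuclideanSpace.norm_toLp_zpow_mul hlam p z,
    by rw [hF lam hlam, hlamk, div_mul_cancel₀ w hz]⟩

theorem IsMixedPoly.continuous (hF : IsMixedPoly F) : Continuous F := by
  obtain ⟨S, c, hF⟩ := hF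
  rw [funext hF]
  fun_prop

theorem IsMixedPoly.exists_polynomial_eval_eq_apply_smul (hF : IsMixedPoly F) (z : Cn n) :
    ∃ P : ℂ[X], ∀ t : ℝ, F (t • z) = P.eval (t : ℂ) := by
  obtain ⟨S, c, hF⟩ := hF
  refine ⟨∑ q ∈ S, C (c q * (∏ j, z j ^ q.1 j) * ∏ j, starRingEnd ℂ (z j) ^ q.2 j)
    * X ^ (∑ j, q.1 j + ∑ j, q.2 j), fun t => ?_⟩
  simp only [hF, eval_finsetSum, eval_mul, eval_C, eval_pow, eval_X]
  refine Finset.sum_congr rfl fun q _ => ?_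
  simp only [← Complex.coe_smul, WithLp.ofLp_smul, Pi.smul_apply, smul_eq_mul, map_mul,
    conj_ofReal, mul_pow, Finset.prod_mul_distrib, Finset.prod_pow_eq_pow_sum]
  ring

theorem IsMixedPoly.exists_norm_lt_apply_ne_zero (hF : IsMixedPoly F) {z₀ : Cn n}
    (hz₀ : F z₀ ≠ 0) {ε : ℝ} (hε : 0 < ε) : ∃ z : Cn n, ‖z‖ < ε ∧ F z ≠ 0 := by
  obtain ⟨P, hP⟩ := hF.exists_polynomial_eval_eq_apply_smul z₀
  have hP0 : P ≠ 0 := by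
    intro h
    apply hz₀
    simpa [h] using hP 1
  have hsmall : ∀ᶠ t : ℝ in 𝓝[>] 0, ‖t • z₀‖ < ε := by
    refine nhdsWithin_le_nhds ?_
    have : Tendsto (fun t : ℝ => t • z₀) (𝓝 0) (𝓝 0) :=
      (continuous_id.smul continuous_const).tendsto' 0 0 (zero_smul ℝ z₀)
    exact this.norm.eventually (gt_mem_nhds (by simpa using hε))
  have hroots : {t : ℝ | P.IsRoot t}.Finite :=
    (finite_setOfPred_isRoot hP0).preimage ofReal_injective.injOn
  have hnonroot : ∀ᶠ t : ℝ in 𝓝[>] 0, ¬ P.IsRoot t :=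
    nhdsGT_le_nhdsNE 0 <|
      mem_of_superset (nhdsNE_of_nhdsNE_sdiff_finite univ_mem hroots) fun _ ht => ht.2
  obtain ⟨t, ht, hroot⟩ := (hsmall.and hnonroot).exists
  exact ⟨t • z₀, ht, by rwa [hP]⟩

end

theorem exists_mem_Icc_norm_apply_smul_eq {E G : Type*} [AddCommGroup E] [Module ℝ E]
    [TopologicalSpace E] [ContinuousSMul ℝ E] [SeminormedAddGroup G] {f : E → G}
    (hf : Continuous f) (hf0 : f 0 = 0) (z : E) {r : ℝ} (hr0 : 0 ≤ r) (hr : r ≤ ‖f z‖) :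
    ∃ t ∈ Set.Icc (0 : ℝ) 1, ‖f (t • z)‖ = r := by
  have hcont : ContinuousOn (fun t : ℝ => ‖f (t • z)‖) (Set.Icc 0 1) := by fun_prop
  exact intermediate_value_Icc zero_le_one hcont (by simpa [hf0] using ⟨hr0, hr⟩)

theorem polarWeightedHomogeneous_image_contains_disk_general
    {n : ℕ} (F : Cn n → ℂ)
    (hmixed : IsMixedPoly F) (hnc : ¬ ∀ z : Cn n, F z = F 0)
    (hpolar : IsPolarWeightedHomogeneous F) :
    ∀ ε > (0 : ℝ), ∃ η > (0 : ℝ), ∀ w : ℂ, ‖w‖ < η →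
      ∃ z : Cn n, ‖z‖ < ε ∧ F z = w := by
  intro ε hε
  have hF0 := hpolar.apply_zero
  obtain ⟨z₀, hz₀⟩ : ∃ z₀, F z₀ ≠ 0 := by simpa [hF0] using hnc
  obtain ⟨z₁, hz₁ε, hz₁⟩ := hmixed.exists_norm_lt_apply_ne_zero hz₀ hε
  refine ⟨‖F z₁‖, norm_pos_iff.mpr hz₁, fun w hw => ?_⟩
  obtain ⟨t, ⟨ht0, ht1⟩, ht⟩ :=
    exists_mem_Icc_norm_apply_smul_eq hmixed.continuous hF0 z₁ (norm_nonneg w) hw.le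
  obtain ⟨z, hz, rfl⟩ := hpolar.exists_norm_eq_apply_eq ht
  refine ⟨z, ?_, rfl⟩
  calc ‖z‖ = t * ‖z₁‖ := by rw [hz, norm_smul, Real.norm_of_nonneg ht0]
    _ ≤ ‖z₁‖ := mul_le_of_le_one_left (norm_nonneg _) ht1
    _ < ε := hz₁ε

/-- **Lemma in the proof of Theorem 5.2** (via the Curve Selection Lemma and the
`S¹`-action):  the image of a nonconstant polar weighted-homogeneous mixed polynomial
`F : ℂⁿ → ℂ`, `n ≥ 2`, contains a disk around `0`, in the germ sense: for every `ε > 0`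
there is `η > 0` such that every value `w` with `|w| < η` is attained by `F` on the
open ball of radius `ε`. -/
theorem polarWeightedHomogeneous_image_contains_disk
    {n : ℕ} (hn : 2 ≤ n) (F : Cn n → ℂ)
    (hmixed : IsMixedPoly F) (hnc : ¬ ∀ z : Cn n, F z = F 0)
    (hpolar : IsPolarWeightedHomogeneous F) :
    ∀ ε > (0 : ℝ), ∃ η > (0 : ℝ), ∀ w : ℂ, ‖w‖ < η →
      ∃ z : Cn n, ‖z‖ < ε ∧ F z = w :=
  polarWeightedHomogeneous_image_contains_disk_general F hmixed hnc hpolar
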